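/- arXiv:2112.13462 — 2 statements merged into one kernel-verified Lean document; each statement's English description precedes it below -/
import Mathlib

section
/- With W a realization of a matroid M and 𝔞 its ideal of pairs, if F is a cyclic flat of M, then the primary component of 𝔞 corresponding to the minimal prime 𝔭 = 𝔭_{F,F^∁} is 𝔭 itself; equivalently, 𝔞·S_𝔭 = 𝔭·S_𝔭 and 𝔭S_𝔭 ∩ S = 𝔭. -/
/-!
Localized at `𝔭 = 𝔭_{F,Fᶜ}`, a generator `f i` (`i ∈ F`) of `𝔭` equals `(f i * g i) / g i` as soon as
`g i ∉ 𝔭`, and symmetrically for `g j` (`j ∉ F`); so everything reduces to these non-memberships.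
A linear form lies in an ideal generated by linear forms only if it lies in their `k`-span, and
`span f ∩ span g = 0` because their dimensions `rk M + rk M✶ = n` add up to that of their sum,
which contains all `n` variables.
Hence `f j ∈ 𝔭` would give `j ∈ cl_M F = F`, and `g i ∈ 𝔭` would give `i ∈ cl_{M✶} Fᶜ`, impossible
because `i` lies on a circuit inside `F`, and a circuit never meets a cocircuit in a single element.
-/

open MvPolynomial

def MatroidCircuit {α : Type*} (M : Matroid α) (C : Set α) : Prop := Minimal M.Dep C

def IsCyclicFlat {α : Type*} (M : Matroid α) (F : Set α) : Prop :=
  M.IsFlat F ∧ ∃ 𝒞 : Set (Set α), (∀ C ∈ 𝒞, MatroidCircuit M C) ∧ F = ⋃₀ 𝒞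

open Set Submodule Module

namespace Matroid

variable {α k V : Type*} [Field k] [AddCommGroup V] [Module k V] {M : Matroid α} {v : α → V}

lemma Indep.mem_closure_iff_mem_span (hv : ∀ I, M.Indep I ↔ LinearIndepOn k v I) {J : Set α}
    (hJ : M.Indep J) {e : α} (he : e ∈ M.E) : e ∈ M.closure J ↔ v e ∈ span k (v '' J) := by
  by_cases heJ : e ∈ J
  · exact iff_of_true (M.subset_closure J hJ.subset_ground heJ)
      (subset_span (mem_image_of_mem v heJ))
  have h := (hJ.insert_indep_iff_of_notMem heJ).symm.trans
    ((hv _).trans (linearIndepOn_insert heJ))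
  simp only [mem_sdiff, he, true_and, (hv J).1 hJ] at h
  exact not_iff_not.mp h

lemma IsBasis.span_image_eq (hv : ∀ I, M.Indep I ↔ LinearIndepOn k v I) {J X : Set α}
    (hJ : M.IsBasis J X) : span k (v '' J) = span k (v '' X) := by
  refine le_antisymm (span_mono (image_mono hJ.subset)) (span_le.mpr ?_)
  rintro - ⟨x, hx, rfl⟩
  exact (hJ.indep.mem_closure_iff_mem_span hv (hJ.subset_ground hx)).1 (hJ.subset_closure hx)

lemma mem_closure_iff_mem_span (hv : ∀ I, M.Indep I ↔ LinearIndepOn k v I) {X : Set α}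
    (hX : X ⊆ M.E) {e : α} (he : e ∈ M.E) : e ∈ M.closure X ↔ v e ∈ span k (v '' X) := by
  obtain ⟨J, hJ⟩ := M.exists_isBasis X hX
  rw [← hJ.closure_eq_closure, ← hJ.span_image_eq hv]
  exact hJ.indep.mem_closure_iff_mem_span hv he

lemma IsBase.finrank_span_range_eq_ncard [Finite α] (hv : ∀ I, M.Indep I ↔ LinearIndepOn k v I)
    (hE : M.E = univ) {B : Set α} (hB : M.IsBase B) :
    finrank k (span k (range v)) = B.ncard := by
  have := Fintype.ofFinite B
  rw [← image_univ, ← hE, ← hB.isBasis_ground.span_image_eq hv, image_eq_range,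
    finrank_span_eq_card ((hv B).1 hB.indep), ← Nat.card_eq_fintype_card, Nat.card_coe_set_eq]

lemma finrank_span_range_add_finrank_span_range_dual [Finite α] {w : α → V}
    (hv : ∀ I, M.Indep I ↔ LinearIndepOn k v I) (hw : ∀ I, M✶.Indep I ↔ LinearIndepOn k w I)
    (hE : M.E = univ) :
    finrank k (span k (range v)) + finrank k (span k (range w)) = Nat.card α := by
  obtain ⟨B, hB⟩ := M.exists_isBase
  rw [hB.finrank_span_range_eq_ncard hv hE,
    hB.compl_isBase_dual.finrank_span_range_eq_ncard hw (by rw [dual_ground, hE]), hE,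
    ← compl_eq_univ_sdiff, ncard_add_ncard_compl]

lemma disjoint_span_range_of_card_le_finrank [Finite α] {w : α → V}
    (hv : ∀ I, M.Indep I ↔ LinearIndepOn k v I) (hw : ∀ I, M✶.Indep I ↔ LinearIndepOn k w I)
    (hE : M.E = univ) (h : Nat.card α ≤ finrank k (span k (range v ∪ range w))) :
    Disjoint (span k (range v)) (span k (range w)) := by
  have := FiniteDimensional.span_of_finite k (finite_range v)
  have := FiniteDimensional.span_of_finite k (finite_range w)
  have hsum := finrank_sup_add_finrank_inf_eq (span k (range v)) (span k (range w))
  rw [finrank_span_range_add_finrank_span_range_dual hv hw hE, ← span_union] at hsum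
  rw [disjoint_iff, ← Submodule.finrank_eq_zero]
  omega

lemma IsCircuit.notMem_dual_closure {C X : Set α} (hC : M.IsCircuit C) (hCX : Disjoint C X)
    {e : α} (he : e ∈ C) : e ∉ M✶.closure X := by
  intro hcl
  obtain ⟨K, hKX, hK, heK⟩ := exists_isCircuit_of_mem_closure hcl (hCX.notMem_of_mem_left he)
  refine hC.inter_isCocircuit_ne_singleton hK (e := e) (subset_antisymm ?_ (by simp [he, heK]))
  rintro x ⟨hxC, hxK⟩
  exact (hKX hxK).resolve_right (hCX.notMem_of_mem_left hxC)

end Matroid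

lemma Submodule.mem_of_mem_sup_of_disjoint {R V : Type*} [Ring R] [AddCommGroup V] [Module R V]
    {A B A' B' : Submodule R V} (hAB : Disjoint A B) (hA' : A' ≤ A) (hB' : B' ≤ B) {x : V}
    (hxB : x ∈ B) (hx : x ∈ A' ⊔ B') : x ∈ B' := by
  obtain ⟨a, ha, b, hb, rfl⟩ := mem_sup.mp hx
  have ha0 : a = 0 := (disjoint_def.mp hAB) a (hA' ha) (by simpa using B.sub_mem hxB (hB' hb))
  simpa [ha0] using hb

namespace MvPolynomial

section CommSemiring

variable {σ R : Type*} [CommSemiring R]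

theorem homogeneousComponent_mul_of_isHomogeneous {m : ℕ} {t : MvPolynomial σ R}
    (ht : t.IsHomogeneous m) (a : MvPolynomial σ R) :
    homogeneousComponent m (a * t) = C (coeff 0 a) * t := by
  classical
  induction a using MvPolynomial.induction_on' with
  | monomial d r =>
    have hdt : (monomial d r * t).IsHomogeneous (d.degree + m) :=
      (isHomogeneous_monomial r rfl).mul ht
    rw [homogeneousComponent_of_mem hdt, coeff_monomial]
    rcases eq_or_ne d 0 with rfl | hd
    · rw [if_pos rfl, map_zero, zero_add, if_pos rfl, monomial_zero']
    · rw [if_neg hd, C_0, zero_mul, if_neg]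
      simpa [Finsupp.degree_eq_zero_iff] using hd
  | add a b ha hb => rw [add_mul, map_add, ha, hb, coeff_add, C_add, add_mul]

theorem IsHomogeneous.mem_span_of_mem_ideal_span {m : ℕ} {T : Set (MvPolynomial σ R)}
    (hT : ∀ t ∈ T, t.IsHomogeneous m) {p : MvPolynomial σ R} (hp : p.IsHomogeneous m)
    (h : p ∈ Ideal.span T) : p ∈ span R T := by
  -- quantifying over the multiplier `a` is what makes the `smul` step of the induction go through
  have key : ∀ x ∈ Ideal.span T, ∀ a, homogeneousComponent m (a * x) ∈ span R T := by
    intro x hx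
    induction hx using Submodule.span_induction with
    | mem t htT =>
      intro a
      rw [homogeneousComponent_mul_of_isHomogeneous (hT t htT), ← smul_eq_C_mul]
      exact Submodule.smul_mem _ _ (subset_span htT)
    | zero => simp
    | add x y _ _ hx hy =>
      intro a
      rw [mul_add, map_add]
      exact Submodule.add_mem _ (hx a) (hy a)
    | smul b x _ hx => intro a; rw [smul_eq_mul, ← mul_assoc]; exact hx (a * b)
  simpa [homogeneousComponent_of_mem hp] using key p h 1

end CommSemiring

variable {σ α k : Type*} [Field k]

theorem card_le_finrank_span_of_X_mem [Fintype σ] {s : Set (MvPolynomial σ k)} (hs : s.Finite)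
    (hX : ∀ j, X j ∈ span k s) : Fintype.card σ ≤ finrank k (span k s) := by
  have := FiniteDimensional.span_of_finite k hs
  rw [← finrank_span_eq_card (linearIndependent_X σ k)]
  exact Submodule.finrank_mono (span_le.mpr (range_subset_iff.mpr hX))

theorem mem_span_image_of_mem_ideal_span_union {m : ℕ} {f g : α → MvPolynomial σ k}
    (hf : ∀ i, (f i).IsHomogeneous m) (hg : ∀ i, (g i).IsHomogeneous m)
    (hfg : Disjoint (span k (range f)) (span k (range g))) {F G : Set α} {i : α}
    (h : g i ∈ Ideal.span (f '' F ∪ g '' G)) : g i ∈ span k (g '' G) := by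
  have hT : ∀ t ∈ f '' F ∪ g '' G, t.IsHomogeneous m := by
    rintro - (⟨j, -, rfl⟩ | ⟨j, -, rfl⟩)
    exacts [hf j, hg j]
  have hlin := (hg i).mem_span_of_mem_ideal_span hT h
  rw [span_union] at hlin
  exact mem_of_mem_sup_of_disjoint hfg (span_mono (image_subset_range f F))
    (span_mono (image_subset_range g G)) (subset_span (mem_range_self i)) hlin

end MvPolynomial

namespace Ideal

variable {R : Type*} [CommRing R]

theorem map_atPrime_eq_of_forall_mul_mem (P : Ideal R) [P.IsPrime] {I : Ideal R} {T : Set R}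
    (hIP : I ≤ P) (hPT : P ≤ span T) (hT : ∀ t ∈ T, ∃ s ∉ P, t * s ∈ I) :
    I.map (algebraMap R (Localization.AtPrime P)) =
      P.map (algebraMap R (Localization.AtPrime P)) := by
  refine le_antisymm (map_mono hIP) (map_le_iff_le_comap.mpr (hPT.trans ?_))
  rw [span_le]
  intro t ht
  obtain ⟨s, hs, hts⟩ := hT t ht
  have hunit : IsUnit (algebraMap R (Localization.AtPrime P) s) :=
    IsLocalization.map_units _ (⟨s, hs⟩ : P.primeCompl)
  rw [SetLike.mem_coe, mem_comap, ← mul_unit_mem_iff_mem _ hunit, ← map_mul]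
  exact mem_map_of_mem _ hts

theorem map_span_range_mul_eq_map_atPrime {α : Type*} (f g : α → R) (F : Set α)
    [(span (f '' F ∪ g '' Fᶜ)).IsPrime]
    (hf : ∀ i ∉ F, f i ∉ span (f '' F ∪ g '' Fᶜ)) (hg : ∀ i ∈ F, g i ∉ span (f '' F ∪ g '' Fᶜ)) :
    (span (range fun i => f i * g i)).map
        (algebraMap R (Localization.AtPrime (span (f '' F ∪ g '' Fᶜ)))) =
      (span (f '' F ∪ g '' Fᶜ)).map
        (algebraMap R (Localization.AtPrime (span (f '' F ∪ g '' Fᶜ)))) := by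
  refine map_atPrime_eq_of_forall_mul_mem _ ?_ le_rfl ?_
  · rw [span_le]
    rintro - ⟨i, rfl⟩
    by_cases hi : i ∈ F
    · exact mul_mem_right _ _ (subset_span (Or.inl ⟨i, hi, rfl⟩))
    · exact mul_mem_left _ _ (subset_span (Or.inr ⟨i, hi, rfl⟩))
  · rintro - (⟨i, hi, rfl⟩ | ⟨i, hi, rfl⟩)
    · exact ⟨g i, hg i hi, subset_span ⟨i, rfl⟩⟩
    · exact ⟨f i, hf i hi, mul_comm (f i) (g i) ▸ subset_span ⟨i, rfl⟩⟩

end Ideal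

theorem primary_component_of_cyclicFlat_general
    (k : Type) [Field k] (n : ℕ)
    (M : Matroid (Fin n)) (hE : M.E = Set.univ)
    (f g : Fin n → MvPolynomial (Fin n) k)
    (hf1 : ∀ i, (f i).IsHomogeneous 1) (hg1 : ∀ i, (g i).IsHomogeneous 1)
    -- `f` realizes `M` and `g` realizes the dual matroid `M✶`:
    (hM : ∀ I : Set (Fin n), M.Indep I ↔ LinearIndependent k (fun i : I => f i))
    (hMd : ∀ I : Set (Fin n), M✶.Indep I ↔ LinearIndependent k (fun i : I => g i))
    -- the `f i` and `g i` together span the space of linear forms, i.e. `S = k[W ⊕ W^⊥]`: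
    (hspan : ∀ j : Fin n, (X j : MvPolynomial (Fin n) k)
      ∈ Submodule.span k (Set.range f ∪ Set.range g))
    -- the ideal of pairs:
    (𝔞 : Ideal (MvPolynomial (Fin n) k))
    (h𝔞 : 𝔞 = Ideal.span (Set.range fun i => f i * g i)) :
    ∀ F : Set (Fin n), IsCyclicFlat M F →
      ∀ hp : (Ideal.span (f '' F ∪ g '' Fᶜ)).IsPrime,
        haveI := hp
        Ideal.map (algebraMap (MvPolynomial (Fin n) k)
            (Localization.AtPrime (Ideal.span (f '' F ∪ g '' Fᶜ)))) 𝔞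
          = Ideal.map (algebraMap (MvPolynomial (Fin n) k)
            (Localization.AtPrime (Ideal.span (f '' F ∪ g '' Fᶜ))))
            (Ideal.span (f '' F ∪ g '' Fᶜ)) ∧
        Ideal.comap (algebraMap (MvPolynomial (Fin n) k)
            (Localization.AtPrime (Ideal.span (f '' F ∪ g '' Fᶜ))))
          (Ideal.map (algebraMap (MvPolynomial (Fin n) k)
            (Localization.AtPrime (Ideal.span (f '' F ∪ g '' Fᶜ))))
            (Ideal.span (f '' F ∪ g '' Fᶜ)))
          = Ideal.span (f '' F ∪ g '' Fᶜ) := by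
  rintro F ⟨hF, 𝒞, h𝒞, hF𝒞⟩ hp
  have hdual : M✶.E = univ := by rw [Matroid.dual_ground, hE]
  have hfg : Disjoint (span k (range f)) (span k (range g)) :=
    Matroid.disjoint_span_range_of_card_le_finrank hM hMd hE <| by
      simpa using card_le_finrank_span_of_X_mem ((finite_range f).union (finite_range g)) hspan
  have hf : ∀ i ∉ F, f i ∉ Ideal.span (f '' F ∪ g '' Fᶜ) := by
    intro i hi hmem
    rw [union_comm] at hmem
    have hfi := mem_span_image_of_mem_ideal_span_union hg1 hf1 hfg.symm hmem
    rw [← Matroid.mem_closure_iff_mem_span hM (hE ▸ subset_univ F) (hE ▸ mem_univ i),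
      hF.closure] at hfi
    exact hi hfi
  have hg : ∀ i ∈ F, g i ∉ Ideal.span (f '' F ∪ g '' Fᶜ) := by
    intro i hi hmem
    obtain ⟨C, hC, hiC⟩ := mem_sUnion.mp (hF𝒞 ▸ hi)
    have hCF : Disjoint C Fᶜ :=
      disjoint_compl_right_iff_subset.mpr (hF𝒞 ▸ subset_sUnion_of_mem hC)
    have hgi := mem_span_image_of_mem_ideal_span_union hf1 hg1 hfg hmem
    rw [← Matroid.mem_closure_iff_mem_span hMd (hdual ▸ subset_univ Fᶜ) (hdual ▸ mem_univ i)]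
      at hgi
    exact Matroid.IsCircuit.notMem_dual_closure (h𝒞 C hC) hCF hiC hgi
  refine ⟨h𝔞 ▸ Ideal.map_span_range_mul_eq_map_atPrime f g F hf hg, ?_⟩
  rw [Localization.AtPrime.map_eq_maximalIdeal]
  exact Localization.AtPrime.under_maximalIdeal

/-- With `W` a realization of `M` and `𝔞` its ideal of pairs, if `F` is a
cyclic flat of `M`, then the primary component of `𝔞` corresponding to the minimal prime
`𝔭 = 𝔭_{F,F^∁}` is `𝔭` itself: `𝔞 · S_𝔭 = 𝔭 · S_𝔭` and `𝔭 S_𝔭 ∩ S = 𝔭`. -/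
theorem primary_component_of_cyclicFlat
    (k : Type) [Field k] (n r : ℕ)
    (M : Matroid (Fin n)) (hE : M.E = Set.univ)
    (hloopless : ∀ i : Fin n, M.Indep {i})
    (f g : Fin n → MvPolynomial (Fin n) k)
    (hf1 : ∀ i, (f i).IsHomogeneous 1) (hg1 : ∀ i, (g i).IsHomogeneous 1)
    -- `f` realizes `M` and `g` realizes the dual matroid `M✶`:
    (hM : ∀ I : Set (Fin n), M.Indep I ↔ LinearIndependent k (fun i : I => f i))
    (hMd : ∀ I : Set (Fin n), M✶.Indep I ↔ LinearIndependent k (fun i : I => g i))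
    -- the `f i` and `g i` together span the space of linear forms, i.e. `S = k[W ⊕ W^⊥]`:
    (hspan : ∀ j : Fin n, (X j : MvPolynomial (Fin n) k)
      ∈ Submodule.span k (Set.range f ∪ Set.range g))
    -- the ideal of pairs:
    (𝔞 : Ideal (MvPolynomial (Fin n) k))
    (h𝔞 : 𝔞 = Ideal.span (Set.range fun i => f i * g i)) :
    ∀ F : Set (Fin n), IsCyclicFlat M F →
      ∀ hp : (Ideal.span (f '' F ∪ g '' Fᶜ)).IsPrime,
        haveI := hp
        Ideal.map (algebraMap (MvPolynomial (Fin n) k)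
            (Localization.AtPrime (Ideal.span (f '' F ∪ g '' Fᶜ)))) 𝔞
          = Ideal.map (algebraMap (MvPolynomial (Fin n) k)
            (Localization.AtPrime (Ideal.span (f '' F ∪ g '' Fᶜ))))
            (Ideal.span (f '' F ∪ g '' Fᶜ)) ∧
        Ideal.comap (algebraMap (MvPolynomial (Fin n) k)
            (Localization.AtPrime (Ideal.span (f '' F ∪ g '' Fᶜ))))
          (Ideal.map (algebraMap (MvPolynomial (Fin n) k)
            (Localization.AtPrime (Ideal.span (f '' F ∪ g '' Fᶜ))))
            (Ideal.span (f '' F ∪ g '' Fᶜ)))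
          = Ideal.span (f '' F ∪ g '' Fᶜ) :=
  primary_component_of_cyclicFlat_general k n M hE f g hf1 hg1 hM hMd hspan 𝔞 h𝔞
end

section
/- Let W be a realization of a matroid M on [n] with coordinate forms f₁,…,fₙ on W and g₁,…,gₙ on W^⊥, and let 𝔞 = (f₁g₁,…,fₙgₙ). If B is a basis of M, then for every a ∈ [n], the element (∏_{i∈B} g_i)·f_a lies in 𝔞. -/
/-! By maximality of a basis `B`, the forms `f i` with `i ∈ B` span `W*`, so `f a` is a
`k`-combination of them; and for `i ∈ B` the product `(∏_{j ∈ B} g j) * f i` contains the generator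
`f i * g i` as a factor. -/

open Submodule Set

theorem Matroid.IsBase.mem_span_image {ι k V : Type*} [DivisionRing k] [AddCommGroup V]
    [Module k V] {M : Matroid ι} {f : ι → V} (hM : ∀ I, M.Indep I ↔ LinearIndepOn k f I)
    {B : Set ι} (hB : M.IsBase B) (a : ι) : f a ∈ span k (f '' B) := by
  rw [((hM B).mp hB.indep).mem_span_iff]
  intro hindep
  rw [hB.eq_of_subset_indep ((hM _).mpr hindep) (subset_insert a B)]
  exact mem_insert a B

theorem Ideal.mul_mem_of_mem_span {k S : Type*} [CommSemiring k] [CommSemiring S] [Algebra k S]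
    {I : Ideal S} {c x : S} {s : Set S} (hs : ∀ v ∈ s, c * v ∈ I)
    (hx : x ∈ Submodule.span k s) : c * x ∈ I :=
  (Submodule.span_le (p := (I.restrictScalars k).comap (LinearMap.mulLeft k c)) |>.mpr hs) hx

theorem Finset.prod_mul_mem_span_range_mul {ι S : Type*} [CommSemiring S] [DecidableEq ι]
    (f g : ι → S) {B : Finset ι} {i : ι} (hi : i ∈ B) :
    (∏ j ∈ B, g j) * f i ∈ Ideal.span (Set.range fun j => f j * g j) := by
  rw [← Finset.mul_prod_erase B g hi, mul_comm, ← mul_assoc]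
  exact Ideal.mul_mem_right _ _ (Ideal.subset_span ⟨i, rfl⟩)

theorem base_product_mem_idealOfPairs_general
    (k : Type) [Field k] (S : Type) [CommRing S] [Algebra k S]
    (n : ℕ)
    (M : Matroid (Fin n))
    (f g : Fin n → S)
    -- `f` realizes `M` and `g` realizes the dual matroid `M✶`:
    (hM : ∀ I : Set (Fin n), M.Indep I ↔ LinearIndependent k (fun i : I => f i))
    -- the ideal of pairs:
    (𝔞 : Ideal S) (h𝔞 : 𝔞 = Ideal.span (Set.range fun i => f i * g i)) :
    ∀ (B : Finset (Fin n)), M.IsBase ↑B →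
      ∀ a : Fin n, (∏ i ∈ B, g i) * f a ∈ 𝔞 := by
  intro B hB a
  subst h𝔞
  refine Ideal.mul_mem_of_mem_span (k := k) ?_ (hB.mem_span_image hM a)
  rintro _ ⟨i, hi, rfl⟩
  exact Finset.prod_mul_mem_span_range_mul f g hi

/-- Let `W` be a realization of a matroid `M` on `[n]` with coordinate
linear forms `f 1, …, f n` on `W` and `g 1, …, g n` on `W^⊥` (realizing the dual
matroid), and let `𝔞 = (f 1 * g 1, …, f n * g n)`.  If `B` is a basis of `M`, then for
every `a ∈ [n]`, the element `(∏_{i ∈ B} g i) * f a` lies in `𝔞`. -/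
theorem base_product_mem_idealOfPairs
    (k : Type) [Field k] (S : Type) [CommRing S] [Algebra k S]
    (n : ℕ)
    (M : Matroid (Fin n)) (hE : M.E = Set.univ)
    (f g : Fin n → S)
    -- `f` realizes `M` and `g` realizes the dual matroid `M✶`:
    (hM : ∀ I : Set (Fin n), M.Indep I ↔ LinearIndependent k (fun i : I => f i))
    (hMd : ∀ I : Set (Fin n), M✶.Indep I ↔ LinearIndependent k (fun i : I => g i))
    -- the ideal of pairs:
    (𝔞 : Ideal S) (h𝔞 : 𝔞 = Ideal.span (Set.range fun i => f i * g i)) :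
    ∀ (B : Finset (Fin n)), M.IsBase ↑B →
      ∀ a : Fin n, (∏ i ∈ B, g i) * f a ∈ 𝔞 :=
  base_product_mem_idealOfPairs_general k S n M f g hM 𝔞 h𝔞
end
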